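/- arXiv:0808.0108 — 2 statements merged into one kernel-verified Lean document; each statement's English description precedes it below -/
import Mathlib

section
/- Let Q be a rack. The map r^n sending a Yang-Baxter n-cochain f to its diagonal part (keeping entries with x_i = y_i for all i, setting all others to zero) is a cochain map commuting with the coboundary, restricts to the identity on diagonal cochains, and hence rack cohomology is a direct summand of Yang-Baxter cohomology. -/
open scoped Classical

variable {Q : Type*}

/-- A rack: every right translation is a bijection, and self-distributivity holds. -/
def IsRack (op : Q → Q → Q) : Prop :=
  (∀ y : Q, Function.Bijective fun x => op x y) ∧
    ∀ a b c : Q, op (op a b) c = op (op a c) (op b c)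

/-- Behavioural equivalence: `x ≡ y` iff `a ∗ x = a ∗ y` for all `a`. -/
def behEq (op : Q → Q → Q) (x y : Q) : Prop := ∀ a : Q, op a x = op a y

noncomputable section

variable {A : Type*} [CommRing A]

/-- The iterated action `x_i ^ (x_{i+1} ⋯ x_n)`. -/
def opChain (op : Q → Q → Q) {n : ℕ} (x : Fin (n + 1) → Q) (i : Fin (n + 1)) : Q :=
  ((List.finRange (n + 1)).filter fun j => i < j).foldl (fun a j => op a (x j)) (x i)

/-- The partial Yang-Baxter coboundary `d_i^n`. -/
def dpart (op : Q → Q → Q) {n : ℕ} (i : Fin (n + 1))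
    (f : (Fin n → Q) → (Fin n → Q) → A) :
    (Fin (n + 1) → Q) → (Fin (n + 1) → Q) → A := fun x y =>
  f (x ∘ i.succAbove) (y ∘ i.succAbove) *
      (if opChain op x i = opChain op y i then (1 : A) else 0) -
    f (fun j => if i.succAbove j < i then op (x (i.succAbove j)) (x i) else x (i.succAbove j))
      (fun j => if i.succAbove j < i then op (y (i.succAbove j)) (y i) else y (i.succAbove j)) *
      (if x i = y i then (1 : A) else 0)

/-- The Yang-Baxter coboundary `d^n = Σ (-1)^i d_i^n`. -/
def dYB (op : Q → Q → Q) {n : ℕ} (f : (Fin n → Q) → (Fin n → Q) → A) :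
    (Fin (n + 1) → Q) → (Fin (n + 1) → Q) → A := fun x y =>
  ∑ i : Fin (n + 1), (-1 : A) ^ (i : ℕ) * dpart op i f x y

end

noncomputable section
variable {A : Type*} [CommRing A]

/-- A matrix is diagonal if its entries vanish whenever `x i ≠ y i` for some `i`. -/
def IsDiag {n : ℕ} (f : (Fin n → Q) → (Fin n → Q) → A) : Prop :=
  ∀ x y : Fin n → Q, (∃ i, x i ≠ y i) → f x y = 0

/-- The projection `r^n` onto the diagonal part of a cochain. -/
def rDiag {n : ℕ} (f : (Fin n → Q) → (Fin n → Q) → A) :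
    (Fin n → Q) → (Fin n → Q) → A := fun x y =>
  if ∀ i, x i = y i then f x y else 0

/-!
Off the diagonal (`x ≠ y`) both terms of `d_i^n` applied to a diagonal cochain vanish, because
right translations are injective: the first term needs `x` and `y` to agree away from `i` and
`x_i ^ (x_{i+1} ⋯ x_n) = y_i ^ (y_{i+1} ⋯ y_n)`, which then forces `x_i = y_i`; the second needs
`x_i = y_i` and `x_j ^ x_i = y_j ^ y_i` for `j < i`, which forces `x_j = y_j`. On the diagonal,
`r^n` changes nothing. Summing over `i` gives the statement for `d^n`.
-/

def actBelow (op : Q → Q → Q) {n : ℕ} (i : Fin (n + 1)) (x : Fin (n + 1) → Q) :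
    Fin n → Q :=
  fun j => if i.succAbove j < i then op (x (i.succAbove j)) (x i) else x (i.succAbove j)

theorem dpart_apply (op : Q → Q → Q) {n : ℕ} (i : Fin (n + 1))
    (f : (Fin n → Q) → (Fin n → Q) → A) (x y : Fin (n + 1) → Q) :
    dpart op i f x y =
      f (x ∘ i.succAbove) (y ∘ i.succAbove) *
          (if opChain op x i = opChain op y i then (1 : A) else 0) -
        f (actBelow op i x) (actBelow op i y) * (if x i = y i then (1 : A) else 0) :=
  rfl

theorem rDiag_apply {n : ℕ} (f : (Fin n → Q) → (Fin n → Q) → A) (x y : Fin n → Q) :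
    rDiag f x y = if x = y then f x y else 0 := by
  simp only [rDiag, funext_iff]

theorem isDiag_rDiag {n : ℕ} (f : (Fin n → Q) → (Fin n → Q) → A) : IsDiag (rDiag f) := by
  rintro x y ⟨i, hi⟩
  rw [rDiag_apply, if_neg fun h => hi (congrFun h i)]

theorem rDiag_eq_self_of_isDiag {n : ℕ} {f : (Fin n → Q) → (Fin n → Q) → A}
    (hf : IsDiag f) : rDiag f = f := by
  funext x y
  rw [rDiag_apply]
  by_cases hxy : x = y
  · rw [if_pos hxy]
  · rw [if_neg hxy, hf x y (Function.ne_iff.mp hxy)]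

section InjectiveRightTranslations

variable {op : Q → Q → Q}

theorem injective_foldl_of_injective (hop : ∀ y : Q, Function.Injective fun x => op x y)
    (l : List Q) : Function.Injective fun a => l.foldl op a := by
  induction l with
  | nil => exact fun _ _ h => h
  | cons c l ih => exact fun a b h => hop c (ih h)

theorem eq_of_comp_succAbove_eq_of_opChain_eq (hop : ∀ y : Q, Function.Injective fun x => op x y)
    {n : ℕ} {x y : Fin (n + 1) → Q} {i : Fin (n + 1)}
    (hσ : x ∘ i.succAbove = y ∘ i.succAbove) (hc : opChain op x i = opChain op y i) :
    x = y := by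
  have hne : ∀ j, j ≠ i → x j = y j := fun j hj => by
    obtain ⟨k, rfl⟩ := Fin.exists_succAbove_eq hj
    exact congrFun hσ k
  have hi : x i = y i := by
    simp only [opChain, ← List.foldl_map] at hc
    refine injective_foldl_of_injective hop _ (hc.trans ?_)
    refine congrArg (List.foldl op (y i)) (List.map_congr_left fun j hj => (hne j ?_).symm)
    exact (of_decide_eq_true (List.mem_filter.mp hj).2).ne'
  rw [funext_iff, Fin.forall_iff_succAbove i]
  exact ⟨hi, congrFun hσ⟩

theorem eq_of_apply_eq_of_actBelow_eq (hop : ∀ y : Q, Function.Injective fun x => op x y)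
    {n : ℕ} {x y : Fin (n + 1) → Q} {i : Fin (n + 1)}
    (hi : x i = y i) (hσ : actBelow op i x = actBelow op i y) : x = y := by
  rw [funext_iff, Fin.forall_iff_succAbove i]
  refine ⟨hi, fun j => ?_⟩
  have hj := congrFun hσ j
  simp only [actBelow, hi] at hj
  split_ifs at hj
  exacts [hop _ hj, hj]

theorem dpart_rDiag_apply_of_ne (hop : ∀ y : Q, Function.Injective fun x => op x y)
    {n : ℕ} (i : Fin (n + 1)) (f : (Fin n → Q) → (Fin n → Q) → A)
    {x y : Fin (n + 1) → Q} (hxy : x ≠ y) : dpart op i (rDiag f) x y = 0 := by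
  have h₁ : ¬(x ∘ i.succAbove = y ∘ i.succAbove ∧ opChain op x i = opChain op y i) :=
    fun h => hxy (eq_of_comp_succAbove_eq_of_opChain_eq hop h.1 h.2)
  have h₂ : ¬(actBelow op i x = actBelow op i y ∧ x i = y i) :=
    fun h => hxy (eq_of_apply_eq_of_actBelow_eq hop h.2 h.1)
  rw [dpart_apply, rDiag_apply, rDiag_apply, ite_zero_mul_ite_zero, ite_zero_mul_ite_zero,
    if_neg h₁, if_neg h₂, sub_zero]

theorem dpart_rDiag (hop : ∀ y : Q, Function.Injective fun x => op x y)
    {n : ℕ} (i : Fin (n + 1)) (f : (Fin n → Q) → (Fin n → Q) → A) :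
    dpart op i (rDiag f) = rDiag (dpart op i f) := by
  funext x y
  by_cases hxy : x = y
  · subst hxy
    simp [dpart_apply, rDiag_apply]
  · rw [dpart_rDiag_apply_of_ne hop i f hxy, rDiag_apply, if_neg hxy]

theorem dYB_rDiag (hop : ∀ y : Q, Function.Injective fun x => op x y)
    {n : ℕ} (f : (Fin n → Q) → (Fin n → Q) → A) :
    dYB op (rDiag f) = rDiag (dYB op f) := by
  funext x y
  simp only [dYB, dpart_rDiag hop, rDiag_apply]
  by_cases hxy : x = y <;> simp [hxy]

end InjectiveRightTranslations

/-- The diagonal projection is a cochain retraction: it commutes with each partial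
coboundary `d_i^n` and with `d^n`, its image is diagonal, and it restricts to the
identity on diagonal cochains; hence rack cohomology (the diagonal subcomplex) is a
direct summand of Yang-Baxter cohomology. -/
theorem rDiag_retraction (op : Q → Q → Q) (h : IsRack op) {n : ℕ}
    (f : (Fin n → Q) → (Fin n → Q) → A) :
    (∀ i : Fin (n + 1), dpart op i (rDiag f) = rDiag (dpart op i f)) ∧
      dYB op (rDiag f) = rDiag (dYB op f) ∧
      IsDiag (rDiag f) ∧
      (IsDiag f → rDiag f = f) := by
  have hop : ∀ y : Q, Function.Injective fun x => op x y := fun y => (h.1 y).1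
  exact ⟨fun i => dpart_rDiag hop i f, dYB_rDiag hop f, isDiag_rDiag f, rDiag_eq_self_of_isDiag⟩

end
end

section
/- For each m ∈ ℕ, the cochains that are quasi-diagonal in the last m variables, i.e. C_m^n = { f : Q^n × Q^n → m : f[(x_1..x_n),(y_1..y_n)] = 0 whenever x_i ≢ y_i for some i with n − m < i ≤ n }, form a subcomplex of the Yang-Baxter cochain complex: d^n(C_m^n) ⊆ C_m^{n+1}. Moreover C_m^n = C_n^n for all m > n. -/
open scoped Classical

variable {Q : Type*}

noncomputable section
variable {A : Type*} [CommRing A]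

/-- Membership in `C_m^n`: the cochain is quasi-diagonal in the last `m` variables,
i.e. its entries vanish whenever `x i ≢ y i` for some (0-based) index `i ≥ n - m`. -/
def CmMem (op : Q → Q → Q) (m : ℕ) {n : ℕ}
    (f : (Fin n → Q) → (Fin n → Q) → A) : Prop :=
  ∀ x y : Fin n → Q, (∃ i : Fin n, n - m ≤ (i : ℕ) ∧ ¬ behEq op (x i) (y i)) → f x y = 0

/-!
Fix `k` in the last `m` slots with `x_k ≢ y_k`; every summand `d_i^n f (x, y)` vanishes.
For `i ≠ k` both terms evaluate `f` at tuples that still differ behaviourally in a late slot: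
slot `k` either survives unchanged or becomes `x_k ^ x_i` versus `y_k ^ x_i` (when `x_i = y_i`),
and in a rack right translation preserves `≢`. For `i = k` the second term carries
`δ(x_k, y_k) = 0`; in the first, either `f` already vanishes or all later entries are
behaviourally equal, and then the chains `x_k ^ (x_{k+1} ⋯)` and `y_k ^ (y_{k+1} ⋯)` are
iterated right translates of `x_k ≠ y_k` by behaviourally equal elements, hence differ.
The stabilization `C_{m'}^n = C_n^n` holds because `C_m^n` depends on `m` only through `n - m`.
-/

lemma Fin.val_succAbove_le_succ {n : ℕ} (p : Fin (n + 1)) (i : Fin n) :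
    (p.succAbove i : ℕ) ≤ i + 1 := by
  unfold Fin.succAbove
  split <;> simp

section Rack

variable {op : Q → Q → Q}

lemma ne_of_not_behEq {a b : Q} (h : ¬ behEq op a b) : a ≠ b := by
  rintro rfl
  exact h fun _ => rfl

lemma not_behEq_op_right (h : IsRack op) {a b : Q} (c : Q) (hab : ¬ behEq op a b) :
    ¬ behEq op (op a c) (op b c) := by
  intro hc
  refine hab fun d => (h.1 c).injective ?_
  simpa only [h.2 d a c, h.2 d b c] using hc (op d c)

lemma List.foldl_op_congr {ι : Type*} {x y : ι → Q} (L : List ι)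
    (hxy : ∀ j ∈ L, behEq op (x j) (y j)) (b : Q) :
    L.foldl (fun a j => op a (x j)) b = L.foldl (fun a j => op a (y j)) b := by
  induction L generalizing b with
  | nil => rfl
  | cons j L ih =>
    rw [List.foldl_cons, List.foldl_cons, hxy j List.mem_cons_self]
    exact ih (fun l hl => hxy l (List.mem_cons_of_mem _ hl)) _

lemma List.foldl_op_injective (hinj : ∀ c : Q, Function.Injective fun a => op a c)
    {ι : Type*} (x : ι → Q) (L : List ι) :
    Function.Injective (L.foldl (fun a j => op a (x j))) := by
  induction L with
  | nil => exact Function.injective_id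
  | cons j L ih => exact ih.comp (hinj (x j))

lemma eq_of_opChain_eq (h : IsRack op) {n : ℕ} {x y : Fin (n + 1) → Q} {i : Fin (n + 1)}
    (hlater : ∀ l, i < l → behEq op (x l) (y l))
    (hchain : opChain op x i = opChain op y i) : x i = y i := by
  unfold opChain at hchain
  rw [List.foldl_op_congr (y := x) _ (fun l hl a => (hlater l (by simpa using hl) a).symm)]
    at hchain
  exact List.foldl_op_injective (fun c => (h.1 c).injective) x _ hchain

end Rack

section Subcomplex

variable {op : Q → Q → Q} {m n : ℕ} {f : (Fin n → Q) → (Fin n → Q) → A}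

lemma CmMem.apply_comp_succAbove (hf : CmMem op m f) (i : Fin (n + 1))
    {x y : Fin (n + 1) → Q} {l : Fin (n + 1)} (hli : l ≠ i) (hlm : n + 1 - m ≤ l)
    (hl : ¬ behEq op (x l) (y l)) :
    f (x ∘ i.succAbove) (y ∘ i.succAbove) = 0 := by
  obtain ⟨j, rfl⟩ := Fin.exists_succAbove_eq hli
  have := i.val_succAbove_le_succ j
  exact hf _ _ ⟨j, by omega, hl⟩

lemma CmMem.dpart_eq_zero (h : IsRack op) (hf : CmMem op m f) (i : Fin (n + 1))
    {x y : Fin (n + 1) → Q} {k : Fin (n + 1)} (hkm : n + 1 - m ≤ k)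
    (hk : ¬ behEq op (x k) (y k)) : dpart op i f x y = 0 := by
  unfold dpart
  by_cases hik : i = k
  · subst hik
    rw [if_neg (ne_of_not_behEq hk), mul_zero, sub_zero]
    by_cases hlater : ∀ l, i < l → behEq op (x l) (y l)
    · rw [if_neg (mt (eq_of_opChain_eq h hlater) (ne_of_not_behEq hk)), mul_zero]
    · push Not at hlater
      obtain ⟨l, hil, hl⟩ := hlater
      rw [hf.apply_comp_succAbove i hil.ne' (by omega) hl, zero_mul]
  · rw [hf.apply_comp_succAbove i (Ne.symm hik) hkm hk, zero_mul, zero_sub, neg_eq_zero]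
    by_cases hxy : x i = y i
    · rw [if_pos hxy, mul_one]
      obtain ⟨j, rfl⟩ := Fin.exists_succAbove_eq (Ne.symm hik)
      have := i.val_succAbove_le_succ j
      refine hf _ _ ⟨j, by omega, ?_⟩
      split_ifs
      · exact hxy ▸ not_behEq_op_right h (x i) hk
      · exact hk
    · rw [if_neg hxy, mul_zero]

lemma CmMem.dYB (h : IsRack op) (hf : CmMem op m f) : CmMem op m (dYB op f) := by
  rintro x y ⟨k, hkm, hk⟩
  exact Finset.sum_eq_zero fun i _ => by rw [hf.dpart_eq_zero h i hkm hk, mul_zero]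

end Subcomplex

lemma cmMem_iff_of_sub_eq (op : Q → Q → Q) {m m' n : ℕ} (hmm' : n - m = n - m')
    (g : (Fin n → Q) → (Fin n → Q) → A) : CmMem op m g ↔ CmMem op m' g := by
  unfold CmMem
  rw [hmm']

/-- `C_m^*` is a subcomplex: `d^n (C_m^n) ⊆ C_m^{n+1}`; moreover the filtration
stabilizes: `C_{m'}^n = C_n^n` for all `m' > n`. -/
theorem CmMem_d (op : Q → Q → Q) (h : IsRack op) (m : ℕ) {n : ℕ}
    (f : (Fin n → Q) → (Fin n → Q) → A) (hf : CmMem op m f) :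
    CmMem op m (dYB op f) ∧
      ∀ m' : ℕ, n < m' → ∀ g : (Fin n → Q) → (Fin n → Q) → A,
        (CmMem op m' g ↔ CmMem op n g) :=
  ⟨hf.dYB h, fun _ hm' g => cmMem_iff_of_sub_eq op (by omega) g⟩

end
end
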